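/- arXiv:1501.04783 — 2 statements merged into one kernel-verified Lean document; each statement's English description precedes it below -/
import Mathlib

section
/- Let (u,v,w) be a G₂-frame in ℝ⁷ (orthonormal with φ₀(u,v,w)=0). Then (v×u)×(w×v) = −(w×u). -/
open scoped RealInnerProductSpace

noncomputable section

/-- ℝ⁷ with its Euclidean inner product. -/
abbrev V7 := EuclideanSpace ℝ (Fin 7)

/-- The standard G₂ 3-form φ₀ = e¹²³+e¹⁴⁵+e¹⁶⁷+e²⁴⁶−e²⁵⁷−e³⁴⁷−e³⁵⁶ on ℝ⁷
(indices shifted to 0-based), written as a trilinear alternating function. -/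
def phi0 : (Fin 3 → V7) → ℝ := fun v =>
  let m : Fin 7 → Fin 7 → Fin 7 → ℝ := fun i j k =>
    Matrix.det !![v 0 i, v 0 j, v 0 k; v 1 i, v 1 j, v 1 k; v 2 i, v 2 j, v 2 k]
  m 0 1 2 + m 0 3 4 + m 0 5 6 + m 1 3 5 - m 1 4 6 - m 2 3 6 - m 2 4 5

/-- The 4-form ∗φ₀ = e⁴⁵⁶⁷+e²³⁶⁷+e²³⁴⁵+e¹³⁵⁷−e¹³⁴⁶−e¹²⁵⁶−e¹²⁴⁷ (0-based indices). -/
def starPhi0 : (Fin 4 → V7) → ℝ := fun v =>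
  let m : Fin 7 → Fin 7 → Fin 7 → Fin 7 → ℝ := fun i j k l =>
    Matrix.det !![v 0 i, v 0 j, v 0 k, v 0 l; v 1 i, v 1 j, v 1 k, v 1 l;
                  v 2 i, v 2 j, v 2 k, v 2 l; v 3 i, v 3 j, v 3 k, v 3 l]
  m 3 4 5 6 + m 1 2 5 6 + m 1 2 3 4 + m 0 2 4 6 - m 0 2 3 5 - m 0 1 4 5 - m 0 1 3 6

/-- The cross product on ℝ⁷: the unique vector with ⟨u×v, z⟩ = φ₀(u,v,z) for all z. -/
def cross (u v : V7) : V7 := WithLp.toLp 2 (fun i => phi0 ![u, v, EuclideanSpace.single i 1])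

/-- The triple cross product χ: the unique vector with ⟨χ(u,v,w), z⟩ = ∗φ₀(u,v,w,z). -/
def chi (u v w : V7) : V7 := WithLp.toLp 2 (fun i => starPhi0 ![u, v, w, EuclideanSpace.single i 1])

/-- Interior product ξ⌟α : contraction of a (k+1)-form with ξ in its first slot. -/
def iprod {k : ℕ} (ξ : V7) (α : (Fin (k + 1) → V7) → ℝ) : (Fin k → V7) → ℝ :=
  fun v => α (Fin.cons ξ v)

/-- Wedge product of alternating forms (determinant convention). -/
def wedge {p q : ℕ} (α : (Fin p → V7) → ℝ) (β : (Fin q → V7) → ℝ) :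
    (Fin (p + q) → V7) → ℝ := fun v =>
  (1 / ((p.factorial : ℝ) * q.factorial)) *
    ∑ σ : Equiv.Perm (Fin (p + q)), ((Equiv.Perm.sign σ : ℤ) : ℝ) *
      α (fun i => v (σ (Fin.castAdd q i))) * β (fun j => v (σ (Fin.natAdd p j)))

/-- The dual covector ξ^# = ⟨ξ,·⟩, as a 1-form. -/
def dualCov (ξ : V7) : (Fin 1 → V7) → ℝ := fun v => ⟪ξ, v 0⟫

/-- The standard volume form e¹∧⋯∧e⁷ on ℝ⁷. -/
def vol7 : (Fin 7 → V7) → ℝ := fun v => Matrix.det (Matrix.of fun i j => v i j)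


/-! Besides bilinearity and antisymmetry of ×, the only input is the coordinate identity
x × (x × y) = ⟨x, y⟩ x − |x|² y. Its polarization, applied with x = v × u, y = w, z = v, gives
for arbitrary u, v, w
(v × u) × (w × v) = ⟨u, v⟩ w × v + ⟨v, w⟩ v × u + 2 φ₀(u, v, w) v − |v|² w × u,
and for a G₂-frame only the last term survives. -/

theorem cross_swap (x y : V7) : cross y x = -cross x y := by
  ext i; fin_cases i <;> simp [cross, phi0, Matrix.det_fin_three] <;> ring

theorem cross_add_left (x y z : V7) : cross (x + y) z = cross x z + cross y z := by
  ext i; fin_cases i <;> simp [cross, phi0, Matrix.det_fin_three] <;> ring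

theorem cross_smul_left (c : ℝ) (x y : V7) : cross (c • x) y = c • cross x y := by
  ext i; fin_cases i <;> simp [cross, phi0, Matrix.det_fin_three] <;> ring

def crossBilin : V7 →ₗ[ℝ] V7 →ₗ[ℝ] V7 :=
  LinearMap.mk₂ ℝ cross cross_add_left cross_smul_left
    (fun x y z => by rw [cross_swap, cross_add_left, neg_add, ← cross_swap, ← cross_swap])
    (fun c x y => by rw [cross_swap, cross_smul_left, ← smul_neg, ← cross_swap])

theorem cross_add_right (x y z : V7) : cross x (y + z) = cross x y + cross x z :=
  (crossBilin x).map_add y z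

theorem cross_sub_right (x y z : V7) : cross x (y - z) = cross x y - cross x z :=
  (crossBilin x).map_sub y z

theorem cross_smul_right (c : ℝ) (x y : V7) : cross x (c • y) = c • cross x y :=
  (crossBilin x).map_smul c y

theorem inner_cross (x y z : V7) : ⟪cross x y, z⟫ = phi0 ![x, y, z] := by
  simp [cross, phi0, Matrix.det_fin_three, PiLp.inner_apply, Fin.sum_univ_seven]; ring

theorem inner_cross_self_left (x y : V7) : ⟪cross x y, x⟫ = 0 := by
  rw [inner_cross]; simp [phi0, Matrix.det_fin_three]; ring

theorem cross_cross_self (x y : V7) : cross x (cross x y) = ⟪x, y⟫ • x - ‖x‖ ^ 2 • y := by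
  ext i; fin_cases i <;>
    simp [cross, phi0, Matrix.det_fin_three, EuclideanSpace.real_norm_sq_eq, PiLp.inner_apply,
      Fin.sum_univ_seven] <;> ring

theorem cross_cross_add_cross_cross (x y z : V7) :
    cross x (cross y z) + cross y (cross x z) = ⟪x, z⟫ • y + ⟪y, z⟫ • x - (2 * ⟪x, y⟫) • z := by
  have h := cross_cross_self (x + y) z
  simp only [cross_add_left, cross_add_right, cross_cross_self, norm_add_sq_real,
    inner_add_left] at h
  linear_combination (norm := module) h

theorem cross_cross_cross_eq (u v w : V7) :
    cross (cross v u) (cross w v) =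
      ⟪u, v⟫ • cross w v + ⟪v, w⟫ • cross v u + (2 * phi0 ![u, v, w]) • v - ‖v‖ ^ 2 • cross w u := by
  have hav : cross (cross v u) v = ‖v‖ ^ 2 • u - ⟪v, u⟫ • v := by
    rw [cross_swap, cross_cross_self]; module
  have hφ : ⟪cross v u, w⟫ = -phi0 ![u, v, w] := by
    rw [cross_swap, inner_neg_left, inner_cross]
  have h := cross_cross_add_cross_cross (cross v u) w v
  rw [hav, cross_sub_right, cross_smul_right, cross_smul_right, inner_cross_self_left, hφ,
    real_inner_comm u v, real_inner_comm v w] at h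
  linear_combination (norm := module) h

/-- for a G₂-frame (u,v,w), (v×u)×(w×v) = −(w×u). -/
theorem cross_cross_identity (u v w : V7) (h : Orthonormal ℝ ![u, v, w])
    (hφ : phi0 ![u, v, w] = 0) :
    cross (cross v u) (cross w v) = -cross w u := by
  have hv : ‖v‖ = 1 := by simpa using h.1 1
  have huv : ⟪u, v⟫ = 0 := by simpa using h.2 (show (0 : Fin 3) ≠ 1 by decide)
  have hvw : ⟪v, w⟫ = 0 := by simpa using h.2 (show (1 : Fin 3) ≠ 2 by decide)
  rw [cross_cross_cross_eq, huv, hvw, hφ, hv]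
  simp

end
end

section
/- Let (u,v,w) be a G₂-frame in ℝ⁷ (orthonormal with φ₀(u,v,w)=0) and R = χ(u,v,w). Then the seven vectors u, v, w, R, u×v, v×w, w×u form an orthonormal basis of ℝ⁷. -/
open scoped RealInnerProductSpace

noncomputable section

/-! The inner products of the seven vectors are read off from the defining identities
⟪a × b, z⟫ = φ₀(a, b, z) and ⟪χ(a, b, c), z⟫ = ∗φ₀(a, b, c, z), the alternation of φ₀ and ∗φ₀, and
four identities of the G₂ cross products checked in coordinates: the Lagrange identity
‖a × b‖² = ‖a‖²‖b‖² − ⟪a, b⟫², ⟪a × b, b × c⟫ = ⟪a, b⟫⟪b, c⟫ − ⟪a, c⟫‖b‖², χ(a, b, c) ⊥ a × b and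
‖χ(a, b, c)‖² = det Gram(a, b, c) − φ₀(a, b, c)². For a G₂-frame the Gram determinant is 1 and
φ₀(u, v, w) = 0, so the seven vectors are orthonormal, hence a basis of ℝ⁷. -/

open Matrix

theorem Matrix.det_fin_four {R : Type*} [CommRing R] (A : Matrix (Fin 4) (Fin 4) R) :
    A.det =
      A 0 0 * (A 1 1 * (A 2 2 * A 3 3 - A 2 3 * A 3 2) - A 1 2 * (A 2 1 * A 3 3 - A 2 3 * A 3 1)
        + A 1 3 * (A 2 1 * A 3 2 - A 2 2 * A 3 1))
      - A 0 1 * (A 1 0 * (A 2 2 * A 3 3 - A 2 3 * A 3 2) - A 1 2 * (A 2 0 * A 3 3 - A 2 3 * A 3 0)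
        + A 1 3 * (A 2 0 * A 3 2 - A 2 2 * A 3 0))
      + A 0 2 * (A 1 0 * (A 2 1 * A 3 3 - A 2 3 * A 3 1) - A 1 1 * (A 2 0 * A 3 3 - A 2 3 * A 3 0)
        + A 1 3 * (A 2 0 * A 3 1 - A 2 1 * A 3 0))
      - A 0 3 * (A 1 0 * (A 2 1 * A 3 2 - A 2 2 * A 3 1) - A 1 1 * (A 2 0 * A 3 2 - A 2 2 * A 3 0)
        + A 1 2 * (A 2 0 * A 3 1 - A 2 1 * A 3 0)) := by
  simp [det_succ_row_zero, Fin.sum_univ_succ, Fin.succAbove]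
  ring

lemma phi0_rotate (a b c : V7) : phi0 ![b, c, a] = phi0 ![a, b, c] := by
  simp only [phi0, det_fin_three, of_apply, cons_val_zero, cons_val_one, cons_val]
  ring

lemma starPhi0_rotate (a b c z : V7) : starPhi0 ![b, c, a, z] = starPhi0 ![a, b, c, z] := by
  simp only [starPhi0, det_fin_four, of_apply, cons_val_zero, cons_val_one, cons_val]
  ring

lemma chi_rotate (a b c : V7) : chi b c a = chi a b c := by
  simp only [chi, starPhi0_rotate]

lemma inner_cross_left (a b z : V7) : ⟪cross a b, z⟫ = phi0 ![a, b, z] := by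
  simp only [cross, phi0, det_fin_three,
    PiLp.inner_apply, RCLike.inner_apply, Real.ringHom_apply, Fin.sum_univ_seven,
    of_apply, cons_val_zero, cons_val_one, cons_val,
    PiLp.single_apply, mul_ite, mul_one, mul_zero, Fin.reduceEq, ↓reduceIte]
  ring

lemma inner_chi_left (a b c z : V7) : ⟪chi a b c, z⟫ = starPhi0 ![a, b, c, z] := by
  simp only [chi, starPhi0, det_fin_four,
    PiLp.inner_apply, RCLike.inner_apply, Real.ringHom_apply, Fin.sum_univ_seven,
    of_apply, cons_val_zero, cons_val_one, cons_val,
    PiLp.single_apply, mul_ite, mul_one, mul_zero, Fin.reduceEq, ↓reduceIte]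
  ring

lemma inner_cross_eq_phi0 (a b c : V7) : ⟪a, cross b c⟫ = phi0 ![a, b, c] := by
  rw [real_inner_comm, inner_cross_left, phi0_rotate]

lemma inner_self_cross (a b : V7) : ⟪a, cross a b⟫ = 0 := by
  rw [real_inner_comm, inner_cross_left]
  simp only [phi0, det_fin_three, of_apply, cons_val_zero, cons_val_one, cons_val]
  ring

lemma inner_cross_self (a b : V7) : ⟪b, cross a b⟫ = 0 := by
  rw [real_inner_comm, inner_cross_left]
  simp only [phi0, det_fin_three, of_apply, cons_val_zero, cons_val_one, cons_val]
  ring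

lemma inner_self_chi₁ (a b c : V7) : ⟪a, chi a b c⟫ = 0 := by
  rw [real_inner_comm, inner_chi_left]
  simp only [starPhi0, det_fin_four, of_apply, cons_val_zero, cons_val_one, cons_val]
  ring

lemma inner_self_chi₂ (a b c : V7) : ⟪b, chi a b c⟫ = 0 := by
  rw [← chi_rotate]
  exact inner_self_chi₁ b c a

lemma inner_self_chi₃ (a b c : V7) : ⟪c, chi a b c⟫ = 0 := by
  rw [chi_rotate c a b]
  exact inner_self_chi₁ c a b

lemma inner_chi_cross₁₂ (a b c : V7) : ⟪chi a b c, cross a b⟫ = 0 := by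
  rw [inner_chi_left]
  simp only [cross, phi0, starPhi0, det_fin_three, det_fin_four,
    of_apply, cons_val_zero, cons_val_one, cons_val,
    PiLp.single_apply, mul_ite, mul_one, mul_zero, Fin.reduceEq, ↓reduceIte]
  ring

lemma inner_chi_cross₂₃ (a b c : V7) : ⟪chi a b c, cross b c⟫ = 0 := by
  rw [← chi_rotate]
  exact inner_chi_cross₁₂ b c a

lemma inner_chi_cross₃₁ (a b c : V7) : ⟪chi a b c, cross c a⟫ = 0 := by
  rw [chi_rotate c a b]
  exact inner_chi_cross₁₂ c a b

lemma norm_cross (a b : V7) : ‖cross a b‖ = √(‖a‖ ^ 2 * ‖b‖ ^ 2 - ⟪a, b⟫ ^ 2) := by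
  rw [← Real.sqrt_sq (norm_nonneg _)]
  congr 1
  simp only [cross, phi0, det_fin_three, EuclideanSpace.real_norm_sq_eq,
    PiLp.inner_apply, RCLike.inner_apply, Real.ringHom_apply, Fin.sum_univ_seven,
    of_apply, cons_val_zero, cons_val_one, cons_val,
    PiLp.single_apply, mul_ite, mul_one, mul_zero, Fin.reduceEq, ↓reduceIte]
  ring

lemma inner_cross_cross (a b c : V7) :
    ⟪cross a b, cross b c⟫ = ⟪a, b⟫ * ⟪b, c⟫ - ⟪a, c⟫ * ‖b‖ ^ 2 := by
  rw [inner_cross_left]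
  simp only [cross, phi0, det_fin_three, EuclideanSpace.real_norm_sq_eq,
    PiLp.inner_apply, RCLike.inner_apply, Real.ringHom_apply, Fin.sum_univ_seven,
    of_apply, cons_val_zero, cons_val_one, cons_val,
    PiLp.single_apply, mul_ite, mul_one, mul_zero, Fin.reduceEq, ↓reduceIte]
  ring

lemma norm_chi (a b c : V7) :
    ‖chi a b c‖ = √((gram ℝ ![a, b, c]).det - phi0 ![a, b, c] ^ 2) := by
  rw [← Real.sqrt_sq (norm_nonneg _)]
  congr 1
  simp only [chi, phi0, starPhi0, gram, det_fin_three, det_fin_four,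
    EuclideanSpace.real_norm_sq_eq, PiLp.inner_apply, RCLike.inner_apply, Real.ringHom_apply,
    Fin.sum_univ_seven, of_apply, cons_val_zero, cons_val_one, cons_val,
    PiLp.single_apply, mul_ite, mul_one, mul_zero, Fin.reduceEq, ↓reduceIte]
  ring

/-- for a G₂-frame (u,v,w) and R = χ(u,v,w), the seven vectors
u, v, w, R, u×v, v×w, w×u form an orthonormal basis of ℝ⁷. -/
theorem orthonormal_frame (u v w : V7) (h : Orthonormal ℝ ![u, v, w])
    (hφ : phi0 ![u, v, w] = 0) :
    Orthonormal ℝ ![u, v, w, chi u v w, cross u v, cross v w, cross w u] ∧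
    Submodule.span ℝ
      (Set.range ![u, v, w, chi u v w, cross u v, cross v w, cross w u]) = ⊤ := by
  have hgram : (gram ℝ ![u, v, w]).det = 1 := by
    rw [gram_eq_one_iff_orthonormal.2 h, det_one]
  simp only [orthonormal_vecCons_iff, Fin.forall_fin_succ, cons_val_zero, cons_val_succ,
    cons_val_fin_one, forall_const, orthonormal_subsingleton_iff] at h
  obtain ⟨hu, ⟨huv, huw⟩, hv, hvw, hw⟩ := h
  have huvw : ⟪u, cross v w⟫ = 0 := by rw [inner_cross_eq_phi0, hφ]
  have hvwu : ⟪v, cross w u⟫ = 0 := by rw [inner_cross_eq_phi0, phi0_rotate, hφ]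
  have hwuv : ⟪w, cross u v⟫ = 0 := by rw [inner_cross_eq_phi0, ← phi0_rotate, hφ]
  have hON : Orthonormal ℝ ![u, v, w, chi u v w, cross u v, cross v w, cross w u] := by
    simp [Fin.forall_fin_succ, hu, hv, hw, huv, huw, hvw, inner_eq_zero_symm.1 huv,
      inner_eq_zero_symm.1 huw, inner_eq_zero_symm.1 hvw, huvw, hvwu, hwuv, hgram, hφ,
      inner_self_cross, inner_cross_self, inner_self_chi₁, inner_self_chi₂, inner_self_chi₃,
      inner_chi_cross₁₂, inner_chi_cross₂₃, inner_chi_cross₃₁, norm_cross, norm_chi,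
      inner_cross_cross, real_inner_comm (cross w u) (cross u v)]
  exact ⟨hON, hON.linearIndependent.span_eq_top_of_card_eq_finrank' (by simp)⟩

end
end
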